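/- arXiv:1704.05306 — 2 statements merged into one kernel-verified Lean document; each statement's English description precedes it below -/
import Mathlib

section
/- Let c ∈ ℝ and q : ℝ → ℝ → ℂ. Assume: for every t > 0 the function x ↦ q(x,t) is twice differentiable on ℝ and x ↦ ∂ₓ²q(x,t) is continuous; for every x ∈ ℝ the function t ↦ q(x,t) is differentiable on (0,∞); for every t > 0 the function x ↦ ∂ₜq(x,t) is continuous. For x ≥ 0, t > 0 define the diagonal 2 × 2 matrices Q(x,t) = !![q(x,t), 0; 0, q(-x,t)] and R(x,t) = c • !![conj(q(-x,t)), 0; 0, conj(q(x,t))]. Assume that for all x > 0 and t > 0: i • ∂ₜQ(x,t) + ∂ₓ²Q(x,t) - 2 • Q(x,t) * R(x,t) * Q(x,t) = 0, where ∂ₜ is the derivative of t ↦ Q(x,t) and ∂ₓ² the second derivative of x ↦ Q(x,t). Then for all x ∈ ℝ and all t > 0: i • ∂ₜq(x,t) + ∂ₓ²q(x,t) - 2c • q(x,t) * conj(q(-x,t)) * q(x,t) = 0, i.e. q solves the nonlocal nonlinear Schrödinger equation of Ablowitz–Musslimani on the whole line. -/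
/-!
At `x > 0` the two diagonal entries of the reduced matrix equation are the scalar nonlocal NLS
residual at `x` and at `-x`: the reflection in the second entry of `Q` flips the sign of the
first `x`-derivative, and the second flip restores it. So the residual vanishes off the origin,
and at the origin by continuity.
-/

open Matrix Complex

attribute [local instance] Matrix.normedAddCommGroup Matrix.normedSpace

section DiagonalDerivative

variable {𝕜 E : Type*} [NontriviallyNormedField 𝕜] [NormedAddCommGroup E] [NormedSpace 𝕜 E]

theorem hasDerivAt_matrix_diag {a b : 𝕜 → E} {a' b' : E} {x : 𝕜}
    (ha : HasDerivAt a a' x) (hb : HasDerivAt b b' x) :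
    HasDerivAt (fun s => !![a s, 0; 0, b s]) !![a', 0; 0, b'] x := by
  refine hasDerivAt_pi.2 fun i => hasDerivAt_pi.2 fun j => ?_
  fin_cases i <;> fin_cases j
  exacts [ha, hasDerivAt_const x 0, hasDerivAt_const x 0, hb]

theorem deriv_matrix_diag {a b : 𝕜 → E} {x : 𝕜}
    (ha : DifferentiableAt 𝕜 a x) (hb : DifferentiableAt 𝕜 b x) :
    deriv (fun s => !![a s, 0; 0, b s]) x = !![deriv a x, 0; 0, deriv b x] :=
  (hasDerivAt_matrix_diag ha.hasDerivAt hb.hasDerivAt).deriv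

theorem deriv_matrix_diag_comp_neg {f : 𝕜 → E} (hf : Differentiable 𝕜 f) :
    deriv (fun s => !![f s, 0; 0, f (-s)]) = fun s => !![deriv f s, 0; 0, -deriv f (-s)] := by
  funext s
  rw [deriv_matrix_diag (hf s) (differentiableAt_comp_neg.2 (hf (-s))), deriv_comp_neg]

theorem deriv_deriv_matrix_diag_comp_neg {f : 𝕜 → E} (hf : Differentiable 𝕜 f)
    (hf' : Differentiable 𝕜 (deriv f)) (x : 𝕜) :
    deriv (deriv fun s => !![f s, 0; 0, f (-s)]) x
      = !![deriv (deriv f) x, 0; 0, deriv (deriv f) (-x)] := by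
  rw [deriv_matrix_diag_comp_neg hf,
    deriv_matrix_diag (hf' x) (differentiableAt_comp_neg.2 (hf' (-x))).fun_neg, deriv.fun_neg,
    deriv_comp_neg, neg_neg]

end DiagonalDerivative

theorem matrix_diag_eq_zero_iff {α : Type*} [Zero α] {a b : α} :
    !![a, 0; 0, b] = 0 ↔ a = 0 ∧ b = 0 := by
  simp [← Matrix.ext_iff, Fin.forall_fin_two]

noncomputable def nonlocalNLS (c : ℝ) (q : ℝ → ℝ → ℂ) (x t : ℝ) : ℂ :=
  I * deriv (fun τ => q x τ) t + deriv (deriv fun s => q s t) x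
    - 2 * (c : ℂ) * (q x t * starRingEnd ℂ (q (-x) t) * q x t)

theorem matrixAKNS_reduced_eq_diag_nonlocalNLS (c : ℝ) {q : ℝ → ℝ → ℂ} {x t : ℝ}
    (hq : Differentiable ℝ (fun x => q x t)) (hq' : Differentiable ℝ (deriv fun x => q x t))
    (hqt : DifferentiableAt ℝ (fun τ => q x τ) t)
    (hqt_neg : DifferentiableAt ℝ (fun τ => q (-x) τ) t) :
    I • deriv (fun τ => !![q x τ, 0; 0, q (-x) τ]) t
        + deriv (deriv fun s => !![q s t, 0; 0, q (-s) t]) x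
        - (2 : ℂ) • (!![q x t, 0; 0, q (-x) t]
          * ((c : ℂ) • !![starRingEnd ℂ (q (-x) t), 0; 0, starRingEnd ℂ (q x t)])
          * !![q x t, 0; 0, q (-x) t])
      = !![nonlocalNLS c q x t, 0; 0, nonlocalNLS c q (-x) t] := by
  rw [deriv_matrix_diag hqt hqt_neg, deriv_deriv_matrix_diag_comp_neg hq hq']
  ext i j
  fin_cases i <;> fin_cases j <;> simp [nonlocalNLS] <;> ring

theorem continuous_nonlocalNLS (c : ℝ) {q : ℝ → ℝ → ℂ} {t : ℝ}
    (hq : Continuous fun x => q x t) (hqt : Continuous fun x => deriv (fun τ => q x τ) t)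
    (hqxx : Continuous (deriv (deriv fun x => q x t))) :
    Continuous fun x => nonlocalNLS c q x t := by
  unfold nonlocalNLS
  fun_prop

/-- The γ = -1 reduction of the matrix AKNS half-line problem yields the
nonlocal (Ablowitz–Musslimani) NLS equation on the whole line. -/
theorem nonlocal_nls_from_matrix_reduction
    (c : ℝ) (q : ℝ → ℝ → ℂ)
    -- regularity in x : twice differentiable with continuous second derivative
    (hx1 : ∀ t : ℝ, 0 < t → Differentiable ℝ (fun x => q x t))
    (hx2 : ∀ t : ℝ, 0 < t → Differentiable ℝ (deriv fun x => q x t))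
    (hx3 : ∀ t : ℝ, 0 < t → Continuous (deriv (deriv fun x => q x t)))
    -- regularity in t
    (ht1 : ∀ x : ℝ, ∀ t : ℝ, 0 < t → DifferentiableAt ℝ (fun τ => q x τ) t)
    (ht2 : ∀ t : ℝ, 0 < t → Continuous (fun x => deriv (fun τ => q x τ) t))
    -- the reduced matrix data
    (Q R : ℝ → ℝ → Matrix (Fin 2) (Fin 2) ℂ)
    (hQ : ∀ x t : ℝ, Q x t = !![q x t, 0; 0, q (-x) t])
    (hR : ∀ x t : ℝ, R x t = (c : ℂ) • !![starRingEnd ℂ (q (-x) t), 0; 0, starRingEnd ℂ (q x t)])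
    -- the reduced matrix AKNS equation on the half-line
    (hmat : ∀ x : ℝ, 0 < x → ∀ t : ℝ, 0 < t →
      I • deriv (fun τ => Q x τ) t + deriv (deriv fun s => Q s t) x
        - (2 : ℂ) • (Q x t * R x t * Q x t) = 0) :
    -- conclusion : the nonlocal NLS equation on the whole line
    ∀ x : ℝ, ∀ t : ℝ, 0 < t →
      I * deriv (fun τ => q x τ) t + deriv (deriv fun s => q s t) x
        - 2 * (c : ℂ) * (q x t * starRingEnd ℂ (q (-x) t) * q x t) = 0 := by
  obtain rfl : Q = fun x t => !![q x t, 0; 0, q (-x) t] := funext₂ hQ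
  obtain rfl : R = fun x t =>
      (c : ℂ) • !![starRingEnd ℂ (q (-x) t), 0; 0, starRingEnd ℂ (q x t)] := funext₂ hR
  intro x t ht
  have h_half_line : ∀ y, 0 < y → nonlocalNLS c q y t = 0 ∧ nonlocalNLS c q (-y) t = 0 :=
    fun y hy => matrix_diag_eq_zero_iff.1 <| by
      rw [← matrixAKNS_reduced_eq_diag_nonlocalNLS c (hx1 t ht) (hx2 t ht) (ht1 y t ht)
        (ht1 (-y) t ht)]
      exact hmat y hy t ht
  have h_off_origin : ∀ y ∈ ({0}ᶜ : Set ℝ), nonlocalNLS c q y t = 0 := by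
    intro y hy
    rcases lt_or_gt_of_ne hy with hy | hy
    · simpa using (h_half_line (-y) (neg_pos.2 hy)).2
    · exact (h_half_line y hy).1
  have h_cont := continuous_nonlocalNLS c (hx1 t ht).continuous (ht2 t ht) (hx3 t ht)
  exact congrFun (h_cont.ext_on (dense_compl_singleton 0) continuous_const h_off_origin) x
end

section
/- Let β⁺, β⁻ be nonzero complex numbers, μ ∈ {1, -1}, and let B be the 4 × 4 complex matrix whose only nonzero entries are B₀₁ = β⁺, B₁₀ = μβ⁺, B₂₃ = β⁻, B₃₂ = μβ⁻. Let Σ be the 4 × 4 matrix whose only nonzero entries are Σ₀₁ = Σ₁₀ = Σ₂₃ = Σ₃₂ = 1. Let S : ℂ → Matrix (Fin 4) (Fin 4) ℂ satisfy, for all k ∈ ℂ: (i) S(k)ᵢⱼ = 0 whenever i and j have different parity; (ii) S(k)₀₀ S(k)₂₂ - S(k)₀₂ S(k)₂₀ = 1 and S(k)₁₁ S(k)₃₃ - S(k)₁₃ S(k)₃₁ = 1; (iii) S(k) * (Σ * S(-k) * Σ) = 1; (iv) S(k) * (B * (S(conj k))ᴴ * B⁻¹) = 1. Then, writing ã(k)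 = S(k)₀₀, a(k) = S(k)₂₂ and b(k) = S(k)₀₂, for all k ∈ ℂ: S(k)₁₁ = a(-k), S(k)₃₃ = ã(-k), S(k)₁₃ = -b(-k), S(k)₂₀ = (β⁻/β⁺) · conj(b(-conj k)), S(k)₃₁ = -(β⁻/β⁺) · conj(b(conj k)), and in addition a(k) = conj(a(-conj k)) and ã(k) = conj(ã(-conj k)). -/
/-!
Σ is the permutation matrix of the pair swap `(0 1)(2 3)` and `B = Σ D` with
`D = diag(μβ⁺, β⁺, μβ⁻, β⁻)`. The two symmetries thus present `S(k)⁻¹` as a Σ-conjugate, of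
`S(-k)` and of `D S(k̄)ᴴ D⁻¹` respectively, and comparing them gives `S(-k) = D S(k̄)ᴴ D⁻¹`:
this is where the relations involving complex conjugation come from. The remaining ones live in
the parity blocks: `S(k)` is block diagonal, conjugation by Σ exchanges the even and the odd block,
so the odd block of `S(-k)` is the inverse, that is the adjugate, of the unimodular even block
of `S(k)`.
-/

open Matrix

namespace Matrix

variable {R : Type*}

theorem submatrix_mul_of_apply_eq_zero {l m n o p q : Type*} [Fintype m] [Fintype n]
    [NonUnitalNonAssocSemiring R] (M : Matrix l n R) (N : Matrix n o R) (e : p → l) {f : m → n}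
    (g : q → o) (hf : Function.Injective f) (hM : ∀ i c, c ∉ Set.range f → M (e i) c = 0) :
    (M * N).submatrix e g = M.submatrix e f * N.submatrix f g := by
  ext i j
  simp only [submatrix_apply, mul_apply]
  exact (Fintype.sum_of_injective f hf _ _ (fun c hc => by simp [hM i c hc]) fun _ => rfl).symm

theorem eq_adjugate_of_mul_eq_one {n : Type*} [Fintype n] [DecidableEq n] [CommRing R]
    {M N : Matrix n n R} (hdet : M.det = 1) (h : M * N = 1) : N = M.adjugate := by
  rw [← inv_eq_right_inv h, inv_def, hdet, Ring.inverse_one, one_smul]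

theorem permMatrix_mul_mul_inv_permMatrix {n : Type*} [Fintype n] [DecidableEq n]
    [NonAssocSemiring R] (σ : Equiv.Perm n) (X : Matrix n n R) :
    σ.permMatrix R * X * σ⁻¹.permMatrix R = X.submatrix σ σ := by
  rw [PEquiv.toMatrix_toPEquiv_mul, PEquiv.mul_toMatrix_toPEquiv, submatrix_submatrix]
  rfl

theorem permMatrix_mul_diagonal_conj {n K : Type*} [Fintype n] [DecidableEq n] [Field K]
    (σ : Equiv.Perm n) {d : n → K} (hd : ∀ i, d i ≠ 0) (Y : Matrix n n K) :
    σ.permMatrix K * diagonal d * Y * (σ.permMatrix K * diagonal d)⁻¹ =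
      (diagonal d * Y * diagonal d⁻¹).submatrix σ σ := by
  have hσ : (σ.permMatrix K)⁻¹ = σ⁻¹.permMatrix K :=
    inv_eq_right_inv (by rw [← permMatrix_mul, inv_mul_cancel, permMatrix_one])
  have hd' : (diagonal d)⁻¹ = diagonal d⁻¹ :=
    inv_eq_right_inv (by
      rw [diagonal_mul_diagonal, ← diagonal_one]
      exact congrArg diagonal (funext fun i => mul_inv_cancel₀ (hd i)))
  rw [mul_inv_rev, hd', hσ, ← permMatrix_mul_mul_inv_permMatrix]
  simp only [Matrix.mul_assoc]

theorem submatrix_equiv_injective {m n : Type*} (e : m ≃ n) :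
    Function.Injective fun X : Matrix n n R => X.submatrix e e := by
  intro X Y h
  simpa [submatrix_submatrix] using congrArg (·.submatrix e.symm e.symm) h

end Matrix

namespace NonlocalNLS

def pairSwap : Equiv.Perm (Fin 4) := Equiv.swap 0 1 * Equiv.swap 2 3

def evenIdx : Fin 2 → Fin 4 := ![0, 2]

def oddIdx : Fin 2 → Fin 4 := ![1, 3]

theorem pairSwap_inv : pairSwap⁻¹ = pairSwap := by decide

theorem pairSwap_comp_evenIdx : pairSwap ∘ evenIdx = oddIdx := by decide

theorem evenIdx_injective : Function.Injective evenIdx := by decide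

theorem parity_ne_of_notMem_range_evenIdx (i : Fin 2) (c : Fin 4)
    (hc : c ∉ Set.range evenIdx) : (evenIdx i : ℕ) % 2 ≠ (c : ℕ) % 2 := by
  simp only [Set.mem_range, not_exists] at hc
  revert i c
  decide

variable {R : Type*}

theorem permMatrix_pairSwap [Zero R] [One R] :
    pairSwap.permMatrix R = !![0, 1, 0, 0; 1, 0, 0, 0; 0, 0, 0, 1; 0, 0, 1, 0] := by
  ext i j
  fin_cases i <;> fin_cases j <;> rfl

theorem permMatrix_pairSwap_conj [NonAssocSemiring R] (X : Matrix (Fin 4) (Fin 4) R) :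
    pairSwap.permMatrix R * X * pairSwap.permMatrix R = X.submatrix pairSwap pairSwap := by
  simpa only [pairSwap_inv] using permMatrix_mul_mul_inv_permMatrix pairSwap X

theorem offDiagonalPairs_eq_permMatrix_mul_diagonal [CommSemiring R] (μ b c : R) :
    !![0, b, 0, 0; μ * b, 0, 0, 0; 0, 0, 0, c; 0, 0, μ * c, 0] =
      pairSwap.permMatrix R * diagonal ![μ * b, b, μ * c, c] := by
  rw [permMatrix_pairSwap]
  ext i j
  fin_cases i <;> fin_cases j <;> simp

theorem submatrix_oddIdx_eq_adjugate [CommRing R] {M N : Matrix (Fin 4) (Fin 4) R}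
    (hM : ∀ i j : Fin 4, (i : ℕ) % 2 ≠ (j : ℕ) % 2 → M i j = 0)
    (hdet : M 0 0 * M 2 2 - M 0 2 * M 2 0 = 1)
    (h : M * (pairSwap.permMatrix R * N * pairSwap.permMatrix R) = 1) :
    N.submatrix oddIdx oddIdx = adjugate (M.submatrix evenIdx evenIdx) := by
  refine eq_adjugate_of_mul_eq_one (by rw [det_fin_two]; exact hdet) ?_
  have hblock := congrArg (·.submatrix evenIdx evenIdx) h
  rwa [submatrix_mul_of_apply_eq_zero _ _ _ _ evenIdx_injective
      (fun i c hc => hM _ _ (parity_ne_of_notMem_range_evenIdx i c hc)),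
    permMatrix_pairSwap_conj, submatrix_submatrix, pairSwap_comp_evenIdx,
    submatrix_one _ evenIdx_injective] at hblock

theorem apply_eq_mul_conj_mul_inv {K : Type*} [Field K] [StarRing K]
    {S : K → Matrix (Fin 4) (Fin 4) K} {d : Fin 4 → K} (hd : ∀ i, d i ≠ 0)
    (hsym1 : ∀ k, S k * (pairSwap.permMatrix K * S (-k) * pairSwap.permMatrix K) = 1)
    (hsym2 : ∀ k, S k * (pairSwap.permMatrix K * diagonal d * (S (starRingEnd K k))ᴴ *
      (pairSwap.permMatrix K * diagonal d)⁻¹) = 1)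
    (k : K) (i j : Fin 4) :
    S k i j = d i * starRingEnd K (S (-starRingEnd K k) j i) * (d j)⁻¹ := by
  have h1 := hsym1 (-k)
  have h2 := hsym2 (-k)
  rw [permMatrix_pairSwap_conj] at h1
  rw [permMatrix_mul_diagonal_conj _ hd] at h2
  have hconj := submatrix_equiv_injective pairSwap
    ((inv_eq_right_inv h1).symm.trans (inv_eq_right_inv h2))
  simpa [diagonal_mul, mul_diagonal, starRingEnd_apply] using congrFun₂ hconj i j

end NonlocalNLS

open NonlocalNLS

theorem nonlocal_nls_scattering_reduction_general
    (βp βm : ℂ) (hβp : βp ≠ 0) (hβm : βm ≠ 0)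
    (μ : ℂ) (hμ : μ = 1 ∨ μ = -1)
    (B Sig : Matrix (Fin 4) (Fin 4) ℂ)
    (hB : B = !![0, βp, 0, 0; μ * βp, 0, 0, 0; 0, 0, 0, βm; 0, 0, μ * βm, 0])
    (hSig : Sig = !![0, 1, 0, 0; 1, 0, 0, 0; 0, 0, 0, 1; 0, 0, 1, 0])
    (S : ℂ → Matrix (Fin 4) (Fin 4) ℂ)
    (hsparse : ∀ (k : ℂ) (i j : Fin 4), (i : ℕ) % 2 ≠ (j : ℕ) % 2 → S k i j = 0)
    (hdet1 : ∀ k : ℂ, S k 0 0 * S k 2 2 - S k 0 2 * S k 2 0 = 1)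
    (hsym1 : ∀ k : ℂ, S k * (Sig * S (-k) * Sig) = 1)
    (hsym2 : ∀ k : ℂ, S k * (B * (S (starRingEnd ℂ k))ᴴ * B⁻¹) = 1) :
    ∀ k : ℂ,
      S k 1 1 = S (-k) 2 2
        ∧ S k 3 3 = S (-k) 0 0
        ∧ S k 1 3 = -(S (-k) 0 2)
        ∧ S k 2 0 = (βm / βp) * starRingEnd ℂ (S (-(starRingEnd ℂ k)) 0 2)
        ∧ S k 3 1 = -((βm / βp) * starRingEnd ℂ (S (starRingEnd ℂ k) 0 2))
        ∧ S k 2 2 = starRingEnd ℂ (S (-(starRingEnd ℂ k)) 2 2)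
        ∧ S k 0 0 = starRingEnd ℂ (S (-(starRingEnd ℂ k)) 0 0) := by
  have hμ0 : μ ≠ 0 := by rcases hμ with rfl | rfl <;> norm_num
  set d : Fin 4 → ℂ := ![μ * βp, βp, μ * βm, βm]
  have hd : ∀ i, d i ≠ 0 := by
    intro i
    fin_cases i <;> simp [d, hμ0, hβp, hβm]
  rw [hSig, ← permMatrix_pairSwap] at hsym1
  rw [hB, offDiagonalPairs_eq_permMatrix_mul_diagonal] at hsym2
  have hreal := apply_eq_mul_conj_mul_inv hd hsym1 hsym2
  have hodd (k : ℂ) :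
      (S k).submatrix oddIdx oddIdx = adjugate ((S (-k)).submatrix evenIdx evenIdx) :=
    submatrix_oddIdx_eq_adjugate (hsparse (-k)) (hdet1 (-k))
      (by simpa only [neg_neg] using hsym1 (-k))
  have h11 (k : ℂ) : S k 1 1 = S (-k) 2 2 :=
    (congrFun₂ (hodd k) 0 0).trans (by rw [adjugate_fin_two]; rfl)
  have h13 (k : ℂ) : S k 1 3 = -S (-k) 0 2 :=
    (congrFun₂ (hodd k) 0 1).trans (by rw [adjugate_fin_two]; rfl)
  have h33 (k : ℂ) : S k 3 3 = S (-k) 0 0 :=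
    (congrFun₂ (hodd k) 1 1).trans (by rw [adjugate_fin_two]; rfl)
  intro k
  refine ⟨h11 k, h33 k, h13 k, ?_, ?_, ?_, ?_⟩
  · rw [hreal k 2 0]
    simp only [d, cons_val, cons_val_zero]
    field_simp
  · rw [hreal k 3 1, h13, neg_neg, map_neg]
    simp only [d, cons_val, cons_val_one, cons_val_zero]
    field_simp
  · rw [hreal k 2 2, mul_comm (d 2), mul_inv_cancel_right₀ (hd 2)]
  · rw [hreal k 0 0, mul_comm (d 0), mul_inv_cancel_right₀ (hd 0)]

/-- γ = -1 case of the final proposition: under the off-diagonal Z₂ reduction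
(nonlocal NLS case) the 4×4 full-line scattering matrix reduces to the three
coefficients ã(k) = S(k)₀₀, a(k) = S(k)₂₂ and b(k) = S(k)₀₂ carrying the
Ablowitz–Musslimani nonlocal NLS symmetries. -/
theorem nonlocal_nls_scattering_reduction
    (βp βm : ℂ) (hβp : βp ≠ 0) (hβm : βm ≠ 0)
    (μ : ℂ) (hμ : μ = 1 ∨ μ = -1)
    (B Sig : Matrix (Fin 4) (Fin 4) ℂ)
    (hB : B = !![0, βp, 0, 0; μ * βp, 0, 0, 0; 0, 0, 0, βm; 0, 0, μ * βm, 0])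
    (hSig : Sig = !![0, 1, 0, 0; 1, 0, 0, 0; 0, 0, 0, 1; 0, 0, 1, 0])
    (S : ℂ → Matrix (Fin 4) (Fin 4) ℂ)
    (hsparse : ∀ (k : ℂ) (i j : Fin 4), (i : ℕ) % 2 ≠ (j : ℕ) % 2 → S k i j = 0)
    (hdet1 : ∀ k : ℂ, S k 0 0 * S k 2 2 - S k 0 2 * S k 2 0 = 1)
    (hdet2 : ∀ k : ℂ, S k 1 1 * S k 3 3 - S k 1 3 * S k 3 1 = 1)
    (hsym1 : ∀ k : ℂ, S k * (Sig * S (-k) * Sig) = 1)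
    (hsym2 : ∀ k : ℂ, S k * (B * (S (starRingEnd ℂ k))ᴴ * B⁻¹) = 1) :
    ∀ k : ℂ,
      S k 1 1 = S (-k) 2 2
        ∧ S k 3 3 = S (-k) 0 0
        ∧ S k 1 3 = -(S (-k) 0 2)
        ∧ S k 2 0 = (βm / βp) * starRingEnd ℂ (S (-(starRingEnd ℂ k)) 0 2)
        ∧ S k 3 1 = -((βm / βp) * starRingEnd ℂ (S (starRingEnd ℂ k) 0 2))
        ∧ S k 2 2 = starRingEnd ℂ (S (-(starRingEnd ℂ k)) 2 2)
        ∧ S k 0 0 = starRingEnd ℂ (S (-(starRingEnd ℂ k)) 0 0) :=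
  nonlocal_nls_scattering_reduction_general βp βm hβp hβm μ hμ B Sig hB hSig S hsparse hdet1 hsym1
    hsym2
end
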